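/- Let n ≥ 1. Identify the 2n signed basis vectors of V = Fin n → ℝ with Fin n × Bool via e(i,false) := e_i and e(i,true) := −e_i, and let ν(i,b) := (i, ¬b). Then the map Φ sending α ∈ M(W(B_n), B) to the partial permutation of Fin n × Bool with domain {x : e(x) ∈ dom α} and defined by α(e(x)) = e(Φ(α)(x)) is a well-defined bijection from M(W(B_n), B) onto the set of all partial signed permutations (partial permutations τ of Fin n × Bool whose domain is closed under ν and with τ(ν x) = ν(τ x) for all x in the domain); moreover Φ sends the identity on V to the identity and Φ(αβ) = Φ(α)∘Φ(β). Thus the Boolean reflection monoid of type B is isomorphic to the monoid J_n of partial signed permutations. -/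

import Mathlib

/-- The set `M(G,B)` of partial linear isomorphisms `g|_X` for `g ∈ G`, `X ∈ B`. -/
def MGB {F V : Type*} [Field F] [AddCommGroup V] [Module F V]
    (G : Set (V ≃ₗ[F] V)) (B : Set (Submodule F V)) : Set (V →ₗ.[F] V) :=
  {p | ∃ g ∈ G, ∃ X ∈ B, p = (g : V →ₗ[F] V).toPMap X}

/-- Composition of partial linear maps: domain `{v ∈ dom α : α v ∈ dom β}`,
value `(αβ) v = β (α v)`. -/
noncomputable def pcomp {F V : Type*} [Field F] [AddCommGroup V] [Module F V]
    (α β : V →ₗ.[F] V) : V →ₗ.[F] V :=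
  { domain := (β.domain.comap α.toFun).map α.domain.subtype
    toFun := β.toFun.comp
      ((LinearMap.codRestrict β.domain (α.toFun.comp (β.domain.comap α.toFun).subtype)
          (fun c => c.2)).comp
        (Submodule.equivMapOfInjective α.domain.subtype (Submodule.injective_subtype _)
            (β.domain.comap α.toFun)).symm.toLinearMap) }

/-- The coordinate subspace `X_S = {v : v i = 0 for i ∈ S}`. -/
def coordSubspace {n : ℕ} (S : Set (Fin n)) : Submodule ℝ (Fin n → ℝ) where
  carrier := {v | ∀ i ∈ S, v i = 0}
  add_mem' := by
    intro a b ha hb i hi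
    simp [ha i hi, hb i hi]
  zero_mem' := fun i _ => rfl
  smul_mem' := by
    intro c v hv i hi
    simp [hv i hi]

/-- The Boolean system: all coordinate subspaces `X_S`, `S ⊆ Fin n`. -/
def booleanSystem (n : ℕ) : Set (Submodule ℝ (Fin n → ℝ)) :=
  {X | ∃ S : Set (Fin n), X = coordSubspace S}

/-- The Weyl group of type `B_n`: the signed permutation maps
`(g_{σ,ε} v) i = ε i * v (σ⁻¹ i)` with `ε i = ±1`. -/
def weylB (n : ℕ) : Set ((Fin n → ℝ) ≃ₗ[ℝ] (Fin n → ℝ)) :=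
  {g | ∃ (σ : Equiv.Perm (Fin n)) (ε : Fin n → ℝ), (∀ i, ε i = 1 ∨ ε i = -1) ∧
    ∀ (v : Fin n → ℝ) (i : Fin n), g v i = ε i * v (σ⁻¹ i)}

/-- The signed basis vectors: `e (i, false) = e_i` and `e (i, true) = -e_i`. -/
def signedBasis {n : ℕ} (x : Fin n × Bool) : Fin n → ℝ :=
  if x.2 then -Pi.single x.1 1 else Pi.single x.1 1

/-- Negation on the signed index set: `ν (i, b) = (i, ¬b)`. -/
def nu {n : ℕ} (x : Fin n × Bool) : Fin n × Bool := (x.1, !x.2)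

/-- The partial signed permutations of `Fin n × Bool`: partial permutations whose
domain is closed under `ν` and which commute with `ν`. -/
def partialSignedPerms (n : ℕ) : Set ((Fin n × Bool) ≃. (Fin n × Bool)) :=
  {τ | ∀ x y, τ x = some y → τ (nu x) = some (nu y)}

open scoped Classical

noncomputable section

theorem Equiv.Perm.apply_inv_self {α : Type*} (f : Equiv.Perm α) (x : α) : f (f⁻¹ x) = x :=
  f.apply_symm_apply x

theorem Equiv.Perm.inv_apply_self {α : Type*} (f : Equiv.Perm α) (x : α) : f⁻¹ (f x) = x :=
  f.symm_apply_apply x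

def sgnR (b : Bool) : ℝ := if b then -1 else 1

lemma sgnR_ne_zero (b : Bool) : sgnR b ≠ 0 := by cases b <;> norm_num [sgnR]

lemma sgnR_mul_self (b : Bool) : sgnR b * sgnR b = 1 := by cases b <;> norm_num [sgnR]

lemma sgnR_xor (a b : Bool) : sgnR (a ^^ b) = sgnR a * sgnR b := by
  cases a <;> cases b <;> norm_num [sgnR]

lemma sgnR_inj {a b : Bool} (h : sgnR a = sgnR b) : a = b := by
  revert h; cases a <;> cases b <;> norm_num [sgnR]

def signedMap {n : ℕ} (σ : Equiv.Perm (Fin n)) (ε : Fin n → Bool) :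
    (Fin n → ℝ) →ₗ[ℝ] (Fin n → ℝ) where
  toFun v := fun i => sgnR (ε i) * v (σ⁻¹ i)
  map_add' a b := by funext i; simp [mul_add]
  map_smul' c v := by funext i; simp [smul_eq_mul]; ring

def signedEquiv {n : ℕ} (σ : Equiv.Perm (Fin n)) (ε : Fin n → Bool) :
    (Fin n → ℝ) ≃ₗ[ℝ] (Fin n → ℝ) :=
  LinearEquiv.ofLinear (signedMap σ ε) (signedMap σ⁻¹ (fun i => ε (σ i)))
    (by
      apply LinearMap.ext; intro v; funext i
      simp only [signedMap, LinearMap.coe_comp, LinearMap.coe_mk, AddHom.coe_mk,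
        Function.comp_apply, LinearMap.id_coe, id_eq, inv_inv]
      simp [Equiv.Perm.apply_inv_self, ← mul_assoc, sgnR_mul_self])
    (by
      apply LinearMap.ext; intro v; funext i
      simp only [signedMap, LinearMap.coe_comp, LinearMap.coe_mk, AddHom.coe_mk,
        Function.comp_apply, LinearMap.id_coe, id_eq, inv_inv]
      simp [Equiv.Perm.apply_inv_self, ← mul_assoc, sgnR_mul_self])

lemma signedEquiv_apply {n : ℕ} (σ : Equiv.Perm (Fin n)) (ε : Fin n → Bool)
    (v : Fin n → ℝ) (i : Fin n) : signedEquiv σ ε v i = sgnR (ε i) * v (σ⁻¹ i) := rfl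

lemma signedBasis_eq {n : ℕ} (x : Fin n × Bool) :
    signedBasis x = sgnR x.2 • (Pi.single x.1 1 : Fin n → ℝ) := by
  obtain ⟨j, b⟩ := x
  cases b
  · simp [signedBasis, sgnR]
  · simp only [signedBasis, sgnR, if_true]
    rw [neg_one_smul]

lemma signedBasis_injective {n : ℕ} : Function.Injective (signedBasis (n := n)) := by
  intro x y h
  rw [signedBasis_eq, signedBasis_eq] at h
  have h1 := congrFun h y.1
  by_cases hxy : x.1 = y.1
  · have h2 := congrFun h x.1
    rw [hxy] at h2
    simp only [Pi.smul_apply, Pi.single_eq_same, smul_eq_mul, mul_one] at h2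
    exact Prod.ext hxy (sgnR_inj h2)
  · rw [Pi.smul_apply, Pi.smul_apply, Pi.single_eq_same, Pi.single_eq_of_ne (Ne.symm hxy)] at h1
    simp only [smul_eq_mul, mul_zero, mul_one] at h1
    exact absurd h1.symm (sgnR_ne_zero y.2)

lemma mem_coordSubspace {n : ℕ} {S : Set (Fin n)} {v : Fin n → ℝ} :
    v ∈ coordSubspace S ↔ ∀ i ∈ S, v i = 0 := Iff.rfl

lemma signedBasis_mem_coordSubspace {n : ℕ} {S : Set (Fin n)} {x : Fin n × Bool} :
    signedBasis x ∈ coordSubspace S ↔ x.1 ∉ S := by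
  rw [signedBasis_eq, mem_coordSubspace]
  constructor
  · intro h hx
    have := h x.1 hx
    simp only [Pi.smul_apply, Pi.single_eq_same, smul_eq_mul, mul_one] at this
    exact sgnR_ne_zero x.2 this
  · intro hx i hi
    rw [Pi.smul_apply, Pi.single_eq_of_ne (fun hc => hx (by rwa [← hc])), smul_zero]

lemma signedEquiv_signedBasis {n : ℕ} (σ : Equiv.Perm (Fin n)) (ε : Fin n → Bool)
    (x : Fin n × Bool) :
    signedEquiv σ ε (signedBasis x) = signedBasis (σ x.1, x.2 ^^ ε (σ x.1)) := by
  funext i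
  rw [signedEquiv_apply, signedBasis_eq, signedBasis_eq]
  by_cases hi : i = σ x.1
  · subst hi
    simp only [Pi.smul_apply, Equiv.Perm.inv_apply_self, Pi.single_eq_same, smul_eq_mul,
      mul_one, sgnR_xor]
    ring
  · have h1 : σ⁻¹ i ≠ x.1 := fun hc => hi (by rw [← hc, Equiv.Perm.apply_inv_self])
    rw [Pi.smul_apply, Pi.smul_apply, Pi.single_eq_of_ne h1, Pi.single_eq_of_ne hi,
      smul_zero, smul_zero, mul_zero]

lemma signedEquiv_mem_weylB {n : ℕ} (σ : Equiv.Perm (Fin n)) (ε : Fin n → Bool) :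
    signedEquiv σ ε ∈ weylB n := by
  refine ⟨σ, fun i => sgnR (ε i), fun i => ?_, fun v i => rfl⟩
  cases h : ε i
  · left; simp [sgnR, h]
  · right; simp [sgnR, h]

lemma weylB_normal {n : ℕ} {g : (Fin n → ℝ) ≃ₗ[ℝ] (Fin n → ℝ)} (hg : g ∈ weylB n) :
    ∃ σ ε, g = signedEquiv σ ε := by
  obtain ⟨σ, ε, hε, hval⟩ := hg
  refine ⟨σ, fun i => if ε i = -1 then true else false, ?_⟩
  apply LinearEquiv.toLinearMap_injective
  apply LinearMap.ext; intro v
  funext i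
  rw [LinearEquiv.coe_coe, LinearEquiv.coe_coe, hval v i, signedEquiv_apply]
  congr 1
  rcases hε i with h | h <;> rw [h] <;> norm_num [sgnR]

lemma mgb_normal {n : ℕ} {p : (Fin n → ℝ) →ₗ.[ℝ] (Fin n → ℝ)}
    (hp : p ∈ MGB (weylB n) (booleanSystem n)) :
    ∃ (σ : Equiv.Perm (Fin n)) (ε : Fin n → Bool) (S : Set (Fin n)),
      p = ((signedEquiv σ ε : (Fin n → ℝ) ≃ₗ[ℝ] (Fin n → ℝ)) :
        (Fin n → ℝ) →ₗ[ℝ] (Fin n → ℝ)).toPMap (coordSubspace S) := by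
  obtain ⟨g, hg, X, ⟨S, rfl⟩, rfl⟩ := hp
  obtain ⟨σ, ε, rfl⟩ := weylB_normal hg
  exact ⟨σ, ε, S, rfl⟩

lemma toPMap_mem_MGB {n : ℕ} (σ : Equiv.Perm (Fin n)) (ε : Fin n → Bool) (S : Set (Fin n)) :
    ((signedEquiv σ ε : (Fin n → ℝ) ≃ₗ[ℝ] (Fin n → ℝ)) :
        (Fin n → ℝ) →ₗ[ℝ] (Fin n → ℝ)).toPMap (coordSubspace S) ∈
      MGB (weylB n) (booleanSystem n) :=
  ⟨signedEquiv σ ε, signedEquiv_mem_weylB σ ε, coordSubspace S, ⟨S, rfl⟩, rfl⟩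

def tauOf {n : ℕ} (σ : Equiv.Perm (Fin n)) (ε : Fin n → Bool) (S : Set (Fin n)) :
    (Fin n × Bool) ≃. (Fin n × Bool) where
  toFun x := if x.1 ∈ S then none else some (σ x.1, x.2 ^^ ε (σ x.1))
  invFun y := if σ⁻¹ y.1 ∈ S then none else some (σ⁻¹ y.1, y.2 ^^ ε y.1)
  inv a b := by
    constructor
    · intro h
      split_ifs at h with h1
      rw [Option.some_inj] at h
      subst h
      simp only [if_neg h1, Equiv.Perm.apply_inv_self, Option.some_inj]
      rw [Bool.xor_assoc, Bool.xor_self, Bool.xor_false]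
    · intro h
      split_ifs at h with h1
      rw [Option.some_inj] at h
      subst h
      simp only [Equiv.Perm.inv_apply_self, if_neg h1, Option.some_inj]
      rw [Bool.xor_assoc, Bool.xor_self, Bool.xor_false]

lemma tauOf_apply {n : ℕ} (σ : Equiv.Perm (Fin n)) (ε : Fin n → Bool) (S : Set (Fin n))
    (x : Fin n × Bool) :
    tauOf σ ε S x = if x.1 ∈ S then none else some (σ x.1, x.2 ^^ ε (σ x.1)) := rfl

lemma tauOf_mem_psp {n : ℕ} (σ : Equiv.Perm (Fin n)) (ε : Fin n → Bool) (S : Set (Fin n)) :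
    tauOf σ ε S ∈ partialSignedPerms n := by
  rintro ⟨j, c⟩ y h
  rw [tauOf_apply] at h
  by_cases h1 : j ∈ S
  · rw [if_pos h1] at h
    exact absurd h (by simp)
  rw [if_neg h1, Option.some_inj] at h
  subst h
  show tauOf σ ε S (j, !c) = some (σ j, !(c ^^ ε (σ j)))
  rw [tauOf_apply, if_neg h1, Option.some_inj]
  cases c <;> simp

lemma tauOf_char {n : ℕ} (σ : Equiv.Perm (Fin n)) (ε : Fin n → Bool) (S : Set (Fin n))
    (x y : Fin n × Bool) :
    tauOf σ ε S x = some y ↔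
      ∃ h : signedBasis x ∈ (((signedEquiv σ ε : (Fin n → ℝ) ≃ₗ[ℝ] (Fin n → ℝ)) :
          (Fin n → ℝ) →ₗ[ℝ] (Fin n → ℝ)).toPMap (coordSubspace S)).domain,
        (((signedEquiv σ ε : (Fin n → ℝ) ≃ₗ[ℝ] (Fin n → ℝ)) :
          (Fin n → ℝ) →ₗ[ℝ] (Fin n → ℝ)).toPMap (coordSubspace S)) ⟨signedBasis x, h⟩ =
          signedBasis y := by
  rw [tauOf_apply]
  constructor
  · intro h
    by_cases h1 : x.1 ∈ S
    · rw [if_pos h1] at h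
      exact absurd h (by simp)
    rw [if_neg h1, Option.some_inj] at h
    refine ⟨?_, ?_⟩
    · rw [LinearMap.toPMap_domain]
      exact signedBasis_mem_coordSubspace.2 h1
    · erw [LinearMap.toPMap_apply, LinearEquiv.coe_coe, signedEquiv_signedBasis, h]
  · rintro ⟨h, hval⟩
    rw [LinearMap.toPMap_domain] at h
    have h1 : x.1 ∉ S := signedBasis_mem_coordSubspace.1 h
    erw [LinearMap.toPMap_apply, LinearEquiv.coe_coe, signedEquiv_signedBasis] at hval
    rw [if_neg h1, signedBasis_injective hval]

lemma pequiv_unique {X Y : Type*} {P : X → Y → Prop} {τ τ' : X ≃. Y}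
    (h : ∀ x y, τ x = some y ↔ P x y) (h' : ∀ x y, τ' x = some y ↔ P x y) : τ = τ' := by
  apply PEquiv.ext; intro x
  cases hx : τ x with
  | some y => exact ((h' x y).2 ((h x y).1 hx)).symm
  | none =>
    cases hx' : τ' x with
    | none => rfl
    | some y =>
      rw [(h x y).2 ((h' x y).1 hx')] at hx
      simp at hx

def PhiMap (n : ℕ) (α : MGB (weylB n) (booleanSystem n)) : partialSignedPerms n :=
  ⟨tauOf (mgb_normal α.2).choose (mgb_normal α.2).choose_spec.choose
      (mgb_normal α.2).choose_spec.choose_spec.choose,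
    tauOf_mem_psp _ _ _⟩

lemma PhiMap_char {n : ℕ} (α : MGB (weylB n) (booleanSystem n)) (x y : Fin n × Bool) :
    (PhiMap n α : (Fin n × Bool) ≃. (Fin n × Bool)) x = some y ↔
      ∃ h : signedBasis x ∈ (α : (Fin n → ℝ) →ₗ.[ℝ] (Fin n → ℝ)).domain,
        (α : (Fin n → ℝ) →ₗ.[ℝ] (Fin n → ℝ)) ⟨signedBasis x, h⟩ = signedBasis y := by
  have hspec := (mgb_normal α.2).choose_spec.choose_spec.choose_spec
  rw [show (PhiMap n α : (Fin n × Bool) ≃. (Fin n × Bool)) =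
    tauOf (mgb_normal α.2).choose (mgb_normal α.2).choose_spec.choose
      (mgb_normal α.2).choose_spec.choose_spec.choose from rfl, tauOf_char]
  rw [← hspec]

lemma PhiMap_unique {n : ℕ} (α : MGB (weylB n) (booleanSystem n))
    (τ : (Fin n × Bool) ≃. (Fin n × Bool))
    (h : ∀ x y, τ x = some y ↔
      ∃ h : signedBasis x ∈ (α : (Fin n → ℝ) →ₗ.[ℝ] (Fin n → ℝ)).domain,
        (α : (Fin n → ℝ) →ₗ.[ℝ] (Fin n → ℝ)) ⟨signedBasis x, h⟩ = signedBasis y) :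
    τ = (PhiMap n α : (Fin n × Bool) ≃. (Fin n × Bool)) :=
  pequiv_unique h (PhiMap_char α)

lemma toPMap_eq_of_tauOf_eq {n : ℕ} {σ σ' : Equiv.Perm (Fin n)} {ε ε' : Fin n → Bool}
    {S S' : Set (Fin n)} (h : tauOf σ ε S = tauOf σ' ε' S') :
    ((signedEquiv σ ε : (Fin n → ℝ) ≃ₗ[ℝ] (Fin n → ℝ)) :
        (Fin n → ℝ) →ₗ[ℝ] (Fin n → ℝ)).toPMap (coordSubspace S) =
      ((signedEquiv σ' ε' : (Fin n → ℝ) ≃ₗ[ℝ] (Fin n → ℝ)) :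
        (Fin n → ℝ) →ₗ[ℝ] (Fin n → ℝ)).toPMap (coordSubspace S') := by
  have happ : ∀ x, tauOf σ ε S x = tauOf σ' ε' S' x := fun x => by rw [h]
  have hS : S = S' := by
    ext j
    have h0 := happ (j, false)
    rw [tauOf_apply, tauOf_apply] at h0
    constructor
    · intro hj
      by_contra hj'
      rw [if_pos hj, if_neg hj'] at h0
      exact absurd h0.symm (by simp)
    · intro hj
      by_contra hj'
      rw [if_neg hj', if_pos hj] at h0
      exact absurd h0 (by simp)
  subst hS
  have hagree : ∀ j ∉ S, σ j = σ' j ∧ ε (σ j) = ε' (σ' j) := by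
    intro j hj
    have h0 := happ (j, false)
    rw [tauOf_apply, tauOf_apply, if_neg hj, if_neg hj, Option.some_inj] at h0
    have h1 : σ j = σ' j := congrArg Prod.fst h0
    have h2 := congrArg Prod.snd h0
    simp only [Bool.false_xor] at h2
    exact ⟨h1, h2⟩
  refine LinearPMap.ext rfl ?_
  intro x y hxy
  erw [LinearMap.toPMap_apply, LinearMap.toPMap_apply, LinearEquiv.coe_coe, LinearEquiv.coe_coe]
  show signedEquiv σ ε x = signedEquiv σ' ε' x
  have hmem : (x : Fin n → ℝ) ∈ coordSubspace S := y
  funext i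
  rw [signedEquiv_apply, signedEquiv_apply]
  by_cases hi : σ⁻¹ i ∈ S
  · have hi' : σ'⁻¹ i ∈ S := by
      by_contra hc
      have e1 : σ (σ'⁻¹ i) = i := by
        rw [(hagree _ hc).1, Equiv.Perm.apply_inv_self]
      have e2 : σ⁻¹ i = σ'⁻¹ i := by
        apply σ.injective
        rw [Equiv.Perm.apply_inv_self, e1]
      exact hc (e2 ▸ hi)
    rw [hmem _ hi, hmem _ hi', mul_zero, mul_zero]
  · obtain ⟨h1, h2⟩ := hagree _ hi
    have h4 : σ' (σ⁻¹ i) = i := by rw [← h1, Equiv.Perm.apply_inv_self]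
    have h3 : σ'⁻¹ i = σ⁻¹ i := by
      apply σ'.injective
      rw [Equiv.Perm.apply_inv_self, h4]
    rw [h3]
    congr 2
    rw [Equiv.Perm.apply_inv_self] at h2
    rw [h2, h4]

lemma pcomp_toPMap {F V : Type*} [Field F] [AddCommGroup V] [Module F V]
    (g h : V ≃ₗ[F] V) (X Y : Submodule F V) :
    pcomp ((g : V →ₗ[F] V).toPMap X) ((h : V →ₗ[F] V).toPMap Y) =
      ((g ≪≫ₗ h : V ≃ₗ[F] V) : V →ₗ[F] V).toPMap
        (X ⊓ Y.comap (g : V →ₗ[F] V)) := by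
  refine LinearPMap.ext ?_ ?_
  · show Submodule.map _ _ = _
    ext v
    rw [Submodule.mem_map]
    constructor
    · rintro ⟨w, hw, rfl⟩
      rw [Submodule.mem_comap] at hw
      exact ⟨w.2, hw⟩
    · rintro ⟨hv1, hv2⟩
      exact ⟨⟨v, hv1⟩, Submodule.mem_comap.2 hv2, rfl⟩
  · intro x y hxy
    erw [LinearMap.toPMap_apply]
    simp only [pcomp, LinearPMap.mk_apply, LinearMap.coe_comp, Function.comp_apply,
      LinearEquiv.coe_coe, LinearMap.codRestrict_apply, LinearEquiv.trans_apply]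
    exact congrArg (fun v => h (g v))
      (Submodule.map_equivMapOfInjective_symm_apply _ (Submodule.injective_subtype _) _ ⟨x, y⟩)

lemma signedEquiv_trans {n : ℕ} (σ₁ σ₂ : Equiv.Perm (Fin n)) (ε₁ ε₂ : Fin n → Bool) :
    (signedEquiv σ₁ ε₁ ≪≫ₗ signedEquiv σ₂ ε₂) =
      signedEquiv (σ₂ * σ₁) (fun i => ε₁ (σ₂⁻¹ i) ^^ ε₂ i) := by
  apply LinearEquiv.toLinearMap_injective
  apply LinearMap.ext; intro v
  funext i
  rw [LinearEquiv.coe_coe, LinearEquiv.coe_coe, LinearEquiv.trans_apply]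
  rw [signedEquiv_apply, signedEquiv_apply, signedEquiv_apply]
  rw [sgnR_xor]
  have : (σ₂ * σ₁)⁻¹ i = σ₁⁻¹ (σ₂⁻¹ i) := by
    rw [mul_inv_rev, Equiv.Perm.mul_apply]
  rw [this]
  ring

lemma coord_inf {n : ℕ} (σ₁ : Equiv.Perm (Fin n)) (ε₁ : Fin n → Bool) (S T : Set (Fin n)) :
    coordSubspace S ⊓ (coordSubspace T).comap
        ((signedEquiv σ₁ ε₁ : (Fin n → ℝ) ≃ₗ[ℝ] (Fin n → ℝ)) : (Fin n → ℝ) →ₗ[ℝ] (Fin n → ℝ)) =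
      coordSubspace {j | j ∈ S ∨ σ₁ j ∈ T} := by
  ext v
  rw [Submodule.mem_inf, Submodule.mem_comap, mem_coordSubspace, mem_coordSubspace,
    mem_coordSubspace]
  constructor
  · rintro ⟨ha, hb⟩ j hj
    rcases hj with hj | hj
    · exact ha j hj
    · have := hb (σ₁ j) hj
      rw [LinearEquiv.coe_coe, signedEquiv_apply, Equiv.Perm.inv_apply_self] at this
      rcases mul_eq_zero.1 this with hc | hc
      · exact absurd hc (sgnR_ne_zero _)
      · exact hc
  · intro hv
    refine ⟨fun i hi => hv i (Or.inl hi), fun i hi => ?_⟩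
    rw [LinearEquiv.coe_coe, signedEquiv_apply,
      hv (σ₁⁻¹ i) (Or.inr (by rwa [Equiv.Perm.apply_inv_self])), mul_zero]

lemma tauOf_trans {n : ℕ} (σ₁ σ₂ : Equiv.Perm (Fin n)) (ε₁ ε₂ : Fin n → Bool)
    (S T : Set (Fin n)) :
    (tauOf σ₁ ε₁ S).trans (tauOf σ₂ ε₂ T) =
      tauOf (σ₂ * σ₁) (fun i => ε₁ (σ₂⁻¹ i) ^^ ε₂ i) {j | j ∈ S ∨ σ₁ j ∈ T} := by
  apply PEquiv.ext
  rintro ⟨j, c⟩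
  have htr : (tauOf σ₁ ε₁ S).trans (tauOf σ₂ ε₂ T) (j, c)
      = (tauOf σ₁ ε₁ S (j, c)).bind (tauOf σ₂ ε₂ T) := rfl
  rw [htr, tauOf_apply, tauOf_apply]
  simp only [Set.mem_setOf_eq]
  by_cases h1 : j ∈ S
  · rw [if_pos h1, if_pos (Or.inl h1 : j ∈ S ∨ σ₁ j ∈ T)]
    rfl
  rw [if_neg h1, Option.bind_some, tauOf_apply]
  by_cases h2 : σ₁ j ∈ T
  · rw [if_pos (show ((σ₁ j, c ^^ ε₁ (σ₁ j)).1 ∈ T) from h2),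
      if_pos (Or.inr h2 : j ∈ S ∨ σ₁ j ∈ T)]
  · rw [if_neg (show ¬((σ₁ j, c ^^ ε₁ (σ₁ j)).1 ∈ T) from h2),
      if_neg (show ¬(j ∈ S ∨ σ₁ j ∈ T) from by push_neg; exact ⟨h1, h2⟩)]
    simp [Equiv.Perm.mul_apply, Equiv.Perm.inv_apply_self, Bool.xor_assoc]

lemma psp_symm {n : ℕ} {τ : (Fin n × Bool) ≃. (Fin n × Bool)}
    (hτ : τ ∈ partialSignedPerms n) : τ.symm ∈ partialSignedPerms n := by
  intro x y h
  rw [PEquiv.eq_some_iff] at h ⊢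
  exact hτ _ _ h

lemma psp_shift {n : ℕ} {τ : (Fin n × Bool) ≃. (Fin n × Bool)}
    (hτ : τ ∈ partialSignedPerms n) {j k : Fin n} {b c : Bool} (d : Bool)
    (h : τ (j, b) = some (k, c)) : τ (j, d) = some (k, (b ^^ d) ^^ c) := by
  by_cases hd : d = b
  · subst hd
    simpa using h
  · have hd' : d = !b := by cases b <;> cases d <;> simp_all
    subst hd'
    have := hτ _ _ h
    simp only [nu] at this
    rw [this]
    cases b <;> cases c <;> rfl

lemma psp_key {n : ℕ} {τ : (Fin n × Bool) ≃. (Fin n × Bool)}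
    (hτ : τ ∈ partialSignedPerms n) {j k : Fin n} {b : Bool}
    (h : τ (j, false) = some (k, b)) : τ.symm (k, false) = some (j, b) := by
  have h1 : τ.symm (k, b) = some (j, false) := (PEquiv.eq_some_iff τ).2 h
  have := psp_shift (psp_symm hτ) false h1
  simpa using this

lemma psp_key' {n : ℕ} {τ : (Fin n × Bool) ≃. (Fin n × Bool)}
    (hτ : τ ∈ partialSignedPerms n) {j k : Fin n} {b : Bool}
    (h : τ.symm (k, false) = some (j, b)) : τ (j, false) = some (k, b) := by
  have h1 : τ (j, b) = some (k, false) := (PEquiv.eq_some_iff τ).1 h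
  have := psp_shift hτ false h1
  simpa using this

lemma psp_surj {n : ℕ} (τ : (Fin n × Bool) ≃. (Fin n × Bool))
    (hτ : τ ∈ partialSignedPerms n) :
    ∃ (σ : Equiv.Perm (Fin n)) (ε : Fin n → Bool) (S : Set (Fin n)),
      tauOf σ ε S = τ := by
  classical
  set D : Set (Fin n) := {j | (τ (j, false)).isSome} with hD
  set R : Set (Fin n) := {k | (τ.symm (k, false)).isSome} with hR
  have hfwd : ∀ (j : Fin n) (hj : j ∈ D), (((τ (j, false)).get hj).1) ∈ R := by
    intro j hj
    have h1 : τ (j, false) = some ((τ (j, false)).get hj) := (Option.some_get hj).symm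
    have h2 := psp_key hτ (j := j) (k := ((τ (j, false)).get hj).1)
      (b := ((τ (j, false)).get hj).2) (by simpa using h1)
    show (τ.symm (((τ (j, false)).get hj).1, false)).isSome
    rw [h2]
    rfl
  have hbwd : ∀ (k : Fin n) (hk : k ∈ R), (((τ.symm (k, false)).get hk).1) ∈ D := by
    intro k hk
    have h1 : τ.symm (k, false) = some ((τ.symm (k, false)).get hk) := (Option.some_get hk).symm
    have h2 := psp_key' hτ (j := ((τ.symm (k, false)).get hk).1)
      (k := k) (b := ((τ.symm (k, false)).get hk).2) (by simpa using h1)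
    show (τ (((τ.symm (k, false)).get hk).1, false)).isSome
    rw [h2]
    rfl
  let eDR : {j // j ∈ D} ≃ {k // k ∈ R} :=
    { toFun := fun j => ⟨((τ (j.1, false)).get j.2).1, hfwd j.1 j.2⟩
      invFun := fun k => ⟨((τ.symm (k.1, false)).get k.2).1, hbwd k.1 k.2⟩
      left_inv := by
        rintro ⟨j, hj⟩
        apply Subtype.ext
        have h1 : τ (j, false) = some ((τ (j, false)).get hj) := (Option.some_get hj).symm
        have h2 := psp_key hτ (j := j) (k := ((τ (j, false)).get hj).1)
          (b := ((τ (j, false)).get hj).2) (by simpa using h1)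
        simp only [h2, Option.get_some]
      right_inv := by
        rintro ⟨k, hk⟩
        apply Subtype.ext
        have h1 : τ.symm (k, false) = some ((τ.symm (k, false)).get hk) :=
          (Option.some_get hk).symm
        have h2 := psp_key' hτ (j := ((τ.symm (k, false)).get hk).1)
          (k := k) (b := ((τ.symm (k, false)).get hk).2) (by simpa using h1)
        simp only [h2, Option.get_some] }
  refine ⟨eDR.extendSubtype, fun k => ((τ.symm (k, false)).map Prod.snd).getD false,
    {j | ¬(τ (j, false)).isSome}, ?_⟩
  apply PEquiv.ext
  rintro ⟨j, c⟩
  rw [tauOf_apply]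
  by_cases hj : (τ (j, false)).isSome
  · rw [if_neg (show ¬(j ∈ {j | ¬(τ (j, false)).isSome}) from fun hc => hc hj)]
    obtain ⟨⟨k, b⟩, h1⟩ := Option.isSome_iff_exists.1 hj
    have hσ : eDR.extendSubtype j = k := by
      rw [Equiv.extendSubtype_apply_of_mem eDR j hj]
      show ((τ (j, false)).get hj).1 = k
      simp only [h1, Option.get_some]
    have hsym : τ.symm (k, false) = some (j, b) := psp_key hτ h1
    have hε : ((τ.symm (k, false)).map Prod.snd).getD false = b := by
      rw [hsym]
      rfl
    rw [hσ, hε, (psp_shift hτ c h1 : τ (j, c) = some (k, (false ^^ c) ^^ b))]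
    rw [Option.some_inj, Prod.mk.injEq]
    exact ⟨rfl, by cases c <;> cases b <;> rfl⟩
  · rw [if_pos (show j ∈ {j | ¬(τ (j, false)).isSome} from hj)]
    cases hc : τ (j, c) with
    | none => rfl
    | some y =>
      have := psp_shift hτ false (show τ (j, c) = some (y.1, y.2) from by simpa using hc)
      rw [Option.not_isSome_iff_eq_none.1 hj] at this
      exact absurd this (by simp)

end

/-- There is a bijection `Φ` from the Boolean reflection monoid of
type `B`, `M(W(B_n),B)`, onto the monoid `J_n` of all partial signed permutations of
`Fin n × Bool`, characterized by: `Φ α` sends `x` to `y` iff the signed basis vector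
`e x` lies in `dom α` and `α (e x) = e y`.  Moreover `Φ` sends the identity on `V` to
the identity partial permutation and is multiplicative with respect to composition. -/
theorem boolean_monoid_B_iso_partial_signed_perms (n : ℕ) (hn : 1 ≤ n) :
    ∃ Φ : MGB (weylB n) (booleanSystem n) → partialSignedPerms n,
      (∀ (α : MGB (weylB n) (booleanSystem n)) (x y : Fin n × Bool),
        (Φ α : (Fin n × Bool) ≃. (Fin n × Bool)) x = some y ↔
          ∃ h : signedBasis x ∈ (α : (Fin n → ℝ) →ₗ.[ℝ] (Fin n → ℝ)).domain,
            (α : (Fin n → ℝ) →ₗ.[ℝ] (Fin n → ℝ)) ⟨signedBasis x, h⟩ = signedBasis y) ∧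
      Function.Bijective Φ ∧
      (∀ α : MGB (weylB n) (booleanSystem n),
        (α : (Fin n → ℝ) →ₗ.[ℝ] (Fin n → ℝ)) =
            (LinearMap.id : (Fin n → ℝ) →ₗ[ℝ] (Fin n → ℝ)).toPMap ⊤ →
          (Φ α : (Fin n × Bool) ≃. (Fin n × Bool)) = PEquiv.refl (Fin n × Bool)) ∧
      (∀ α β : MGB (weylB n) (booleanSystem n),
        ∃ h : pcomp (α : (Fin n → ℝ) →ₗ.[ℝ] (Fin n → ℝ)) β ∈ MGB (weylB n) (booleanSystem n),
          (Φ ⟨pcomp (α : (Fin n → ℝ) →ₗ.[ℝ] (Fin n → ℝ)) β, h⟩ :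
              (Fin n × Bool) ≃. (Fin n × Bool)) =
            (Φ α : (Fin n × Bool) ≃. (Fin n × Bool)).trans (Φ β)) := by
  refine ⟨PhiMap n, PhiMap_char, ⟨?_, ?_⟩, ?_, ?_⟩
  · -- injective
    intro α β hab
    have hA := (mgb_normal α.2).choose_spec.choose_spec.choose_spec
    have hB := (mgb_normal β.2).choose_spec.choose_spec.choose_spec
    have h1 : tauOf (mgb_normal α.2).choose (mgb_normal α.2).choose_spec.choose
        (mgb_normal α.2).choose_spec.choose_spec.choose =
        tauOf (mgb_normal β.2).choose (mgb_normal β.2).choose_spec.choose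
          (mgb_normal β.2).choose_spec.choose_spec.choose :=
      congrArg Subtype.val hab
    exact Subtype.ext (hA.trans ((toPMap_eq_of_tauOf_eq h1).trans hB.symm))
  · -- surjective
    rintro ⟨τ, hτ⟩
    obtain ⟨σ, ε, S, hts⟩ := psp_surj τ hτ
    refine ⟨⟨_, toPMap_mem_MGB σ ε S⟩, ?_⟩
    apply Subtype.ext
    refine (PhiMap_unique _ τ fun x y => ?_).symm
    rw [← hts]
    exact tauOf_char σ ε S x y
  · -- identity
    intro α hα
    refine (PhiMap_unique α (PEquiv.refl _) fun x y => ?_).symm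
    rw [hα, PEquiv.refl_apply]
    constructor
    · intro h
      rw [Option.some_inj] at h
      subst h
      refine ⟨Submodule.mem_top, ?_⟩
      erw [LinearMap.toPMap_apply]
      rfl
    · rintro ⟨h, hval⟩
      erw [LinearMap.toPMap_apply] at hval
      rw [Option.some_inj]
      exact signedBasis_injective (by simpa using hval)
  · -- multiplicative
    intro α β
    obtain ⟨σ₁, ε₁, S₁, h₁⟩ := mgb_normal α.2
    obtain ⟨σ₂, ε₂, S₂, h₂⟩ := mgb_normal β.2
    have hcomp : pcomp (α : (Fin n → ℝ) →ₗ.[ℝ] (Fin n → ℝ)) β =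
        ((signedEquiv (σ₂ * σ₁) (fun i => ε₁ (σ₂⁻¹ i) ^^ ε₂ i) :
            (Fin n → ℝ) ≃ₗ[ℝ] (Fin n → ℝ)) : (Fin n → ℝ) →ₗ[ℝ] (Fin n → ℝ)).toPMap
          (coordSubspace {j | j ∈ S₁ ∨ σ₁ j ∈ S₂}) := by
      rw [h₁, h₂, pcomp_toPMap, signedEquiv_trans, coord_inf]
    refine ⟨(by rw [hcomp]; exact toPMap_mem_MGB _ _ _), ?_⟩
    have e0 : (PhiMap n ⟨pcomp (α : (Fin n → ℝ) →ₗ.[ℝ] (Fin n → ℝ)) β,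
        (by rw [hcomp]; exact toPMap_mem_MGB _ _ _)⟩ :
          (Fin n × Bool) ≃. (Fin n × Bool)) =
        tauOf (σ₂ * σ₁) (fun i => ε₁ (σ₂⁻¹ i) ^^ ε₂ i) {j | j ∈ S₁ ∨ σ₁ j ∈ S₂} := by
      refine (PhiMap_unique _ _ fun x y => ?_).symm
      show tauOf (σ₂ * σ₁) _ _ x = some y ↔
        ∃ h : signedBasis x ∈ (pcomp (α : (Fin n → ℝ) →ₗ.[ℝ] (Fin n → ℝ)) β).domain,
          (pcomp (α : (Fin n → ℝ) →ₗ.[ℝ] (Fin n → ℝ)) β) ⟨signedBasis x, h⟩ = signedBasis y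
      rw [hcomp]
      exact tauOf_char _ _ _ x y
    have e1 : (PhiMap n α : (Fin n × Bool) ≃. (Fin n × Bool)) = tauOf σ₁ ε₁ S₁ := by
      refine (PhiMap_unique α _ fun x y => ?_).symm
      rw [h₁]
      exact tauOf_char _ _ _ x y
    have e2 : (PhiMap n β : (Fin n × Bool) ≃. (Fin n × Bool)) = tauOf σ₂ ε₂ S₂ := by
      refine (PhiMap_unique β _ fun x y => ?_).symm
      rw [h₂]
      exact tauOf_char _ _ _ x y
    rw [e0, e1, e2, tauOf_trans]
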